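/- arXiv:2104.04826 — 3 statements merged into one kernel-verified Lean document; each statement's English description precedes it below -/
import Mathlib

section
/- A group G is ICC if and only if every finite index subgroup of G has trivial center. -/
/-!
The conjugacy class of `g` is the orbit of `g` under conjugation, whose stabilizer is the
centralizer `C(g)`; so `g` has a finite conjugacy class exactly when `C(g)` has finite index.
A nontrivial central element `z` of a finite-index subgroup `H` has `H ≤ C(z)`, hence a finite
class; conversely, a nontrivial `g` with a finite class is central in the finite-index
subgroup `C(g)`.
-/

theorem MulAction.finiteIndex_stabilizer_iff_finite_orbit {G X : Type*} [Group G]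
    [MulAction G X] (x : X) : (stabilizer G x).FiniteIndex ↔ (orbit G x).Finite := by
  rw [Subgroup.finiteIndex_iff_finite_quotient, ← Set.finite_coe_iff,
    (orbitEquivQuotientStabilizer G x).finite_iff]

theorem ConjAct.setOf_conj_eq_orbit {G : Type*} [Group G] (g : G) :
    {x : G | ∃ h : G, h * g * h⁻¹ = x} = MulAction.orbit (ConjAct G) g := by
  ext x
  rw [mem_orbit_conjAct, isConj_comm, isConj_iff]
  rfl

namespace Subgroup

variable {G : Type*} [Group G]

theorem index_centralizer_singleton_eq_index_stabilizer (g : G) :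
    (centralizer {g}).index = (MulAction.stabilizer (ConjAct G) g).index := by
  rw [centralizer_eq_comap_stabilizer]
  exact index_comap_of_surjective _ ConjAct.toConjAct.surjective

theorem finiteIndex_centralizer_singleton_iff (g : G) :
    (centralizer {g}).FiniteIndex ↔ {x : G | ∃ h : G, h * g * h⁻¹ = x}.Finite := by
  rw [ConjAct.setOf_conj_eq_orbit, ← MulAction.finiteIndex_stabilizer_iff_finite_orbit,
    finiteIndex_iff, finiteIndex_iff, index_centralizer_singleton_eq_index_stabilizer]

theorem mem_center_iff_le_centralizer {H : Subgroup G} {z : H} :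
    z ∈ center H ↔ H ≤ centralizer {(z : G)} := by
  simp only [mem_center_iff, SetLike.le_def, mem_centralizer_singleton_iff, Subtype.ext_iff,
    coe_mul, Subtype.forall]

end Subgroup

theorem stmt_1 (G : Type*) [Group G] :
    (∀ g : G, g ≠ 1 → Set.Infinite {x : G | ∃ h : G, h * g * h⁻¹ = x}) ↔
    (∀ H : Subgroup G, H.FiniteIndex → Subgroup.center H = ⊥) := by
  constructor
  · intro hicc H _
    refine eq_bot_iff.2 fun z hz => Subgroup.mem_bot.2 <| Subtype.ext ?_
    by_contra hz1
    have := Subgroup.finiteIndex_of_le (Subgroup.mem_center_iff_le_centralizer.1 hz)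
    exact hicc z hz1 ((Subgroup.finiteIndex_centralizer_singleton_iff _).1 this)
  · intro hcen g hg hfin
    have := (Subgroup.finiteIndex_centralizer_singleton_iff g).2 hfin
    have hg_center : (⟨g, Subgroup.mem_centralizer_singleton_iff.2 rfl⟩ :
        Subgroup.centralizer {g}) ∈ Subgroup.center (Subgroup.centralizer {g}) :=
      Subgroup.mem_center_iff_le_centralizer.2 le_rfl
    rw [hcen _ this, Subgroup.mem_bot] at hg_center
    exact hg (congrArg Subtype.val hg_center)
end

section
/- Let n ≥ 1 and d ≥ 2, and let σ be a permutation of {1, …, n + d − 1} such that for every k with 1 ≤ k ≤ n there exists k' with σ(k + i) = k' + i for all 0 ≤ i ≤ d − 1 (i.e., σ maps each block of d consecutive points starting at k to d consecutive points in order). Then σ is the identity permutation. -/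
theorem stmt_11 (n d : ℕ) (hn : 1 ≤ n) (hd : 2 ≤ d)
    (σ : Equiv.Perm (Fin (n + d - 1)))
    (h : ∀ k, ∀ hk : k < n, ∀ i, ∀ hi : i < d,
      ((σ ⟨k + i, by omega⟩ : Fin (n + d - 1)) : ℕ) =
        ((σ ⟨k, by omega⟩ : Fin (n + d - 1)) : ℕ) + i) :
    σ = 1 := by
  -- consecutive step
  have step : ∀ j (hj : j + 1 < n + d - 1),
      ((σ ⟨j + 1, hj⟩ : Fin (n + d - 1)) : ℕ) =
        ((σ ⟨j, by omega⟩ : Fin (n + d - 1)) : ℕ) + 1 := by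
    intro j hj
    by_cases hjn : j < n
    · have := h j hjn 1 (by omega)
      have h0 := h j hjn 0 (by omega)
      simp only [Nat.add_zero] at h0
      convert this using 3
    · have hk : n - 1 < n := by omega
      have hi1 : j - (n - 1) < d := by omega
      have hi2 : j - (n - 1) + 1 < d := by omega
      have e1 := h (n - 1) hk (j - (n - 1)) hi1
      have e2 := h (n - 1) hk (j - (n - 1) + 1) hi2
      have key1 : (⟨n - 1 + (j - (n - 1)), by omega⟩ : Fin (n + d - 1)) = ⟨j, by omega⟩ := by
        ext; simp; omega
      have key2 : (⟨n - 1 + (j - (n - 1) + 1), by omega⟩ : Fin (n + d - 1)) = ⟨j + 1, hj⟩ := by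
        ext; simp; omega
      rw [key1] at e1
      rw [key2] at e2
      omega
  have main : ∀ j (hj : j < n + d - 1),
      ((σ ⟨j, hj⟩ : Fin (n + d - 1)) : ℕ) =
        ((σ ⟨0, by omega⟩ : Fin (n + d - 1)) : ℕ) + j := by
    intro j
    induction j with
    | zero => intro hj; simp
    | succ j ih =>
      intro hj
      have := step j hj
      rw [ih (by omega)] at this
      omega
  have hlast : n + d - 2 < n + d - 1 := by omega
  have hb := (σ ⟨n + d - 2, hlast⟩).isLt
  rw [main _ hlast] at hb
  have h0 : ((σ ⟨0, by omega⟩ : Fin (n + d - 1)) : ℕ) = 0 := by omega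
  ext x
  simp only [Equiv.Perm.coe_one, id_eq]
  have := main x x.isLt
  rw [h0] at this
  simpa [Fin.ext_iff] using this
end

section
/- Let G be a group and φ₁, …, φ_d : G → G injective endomorphisms with ⋂_{i=1}^d Im(φ_i) = {1}. For n ≥ d, define for each 1 ≤ k ≤ n the map κ_k : G^n → G^{n+d−1} by (g₁,…,g_n) ↦ (g₁,…,g_{k−1}, φ₁(g_k), …, φ_d(g_k), g_{k+1},…,g_n). Then ⋂_{k=1}^n Im(κ_k) = {(1,…,1)}. -/
/-- The `d`-ary cloning map on direct products coming from a family of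
endomorphisms `φ₁, …, φ_d`: it replaces the `k`-th coordinate `g k` by the
`d`-tuple `(φ₁ (g k), …, φ_d (g k))`, leaving all other coordinates in place. -/
def cloneMap {G : Type*} [Group G] (d n : ℕ) (φ : Fin d → (G →* G)) (k : Fin n)
    (g : Fin n → G) : Fin (n + d - 1) → G :=
  fun j =>
    if h1 : (j : ℕ) < (k : ℕ) then
      g ⟨j, by have hj := j.isLt; have hk := k.isLt; omega⟩
    else if h2 : (j : ℕ) < (k : ℕ) + d then
      φ ⟨(j : ℕ) - (k : ℕ), by omega⟩ (g k)
    else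
      g ⟨(j : ℕ) - (d - 1), by have hj := j.isLt; have hk := k.isLt; omega⟩

theorem stmt_12 {G : Type*} [Group G] (d n : ℕ) (hd : 2 ≤ d) (hn : d ≤ n)
    (φ : Fin d → (G →* G)) (hinj : ∀ i, Function.Injective (φ i))
    (hint : (⋂ i, Set.range (φ i)) = {1}) :
    (⋂ k : Fin n, Set.range (cloneMap d n φ k)) = {fun _ => (1 : G)} := by
  ext h
  simp only [Set.mem_iInter, Set.mem_range, Set.mem_singleton_iff]
  constructor
  · intro H
    -- Step A: middle coordinates are 1
    have hA : ∀ j : Fin (n + d - 1), d - 1 ≤ (j : ℕ) → (j : ℕ) < n → h j = 1 := by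
      intro j hj1 hj2
      have hmem : h j ∈ ⋂ i, Set.range (φ i) := by
        rw [Set.mem_iInter]
        intro i
        have hi := i.isLt
        obtain ⟨g, hg⟩ := H ⟨(j : ℕ) - (i : ℕ), by omega⟩
        refine ⟨g ⟨(j : ℕ) - (i : ℕ), by omega⟩, ?_⟩
        have hgj := congrFun hg j
        rw [cloneMap] at hgj
        rw [dif_neg (by (try simp only [Fin.val_mk]); omega), dif_pos (by (try simp only [Fin.val_mk]); omega)] at hgj
        have hfin : (⟨(j : ℕ) - ((⟨(j : ℕ) - (i : ℕ), by omega⟩ : Fin n) : ℕ), by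
            simp; omega⟩ : Fin d) = i := by
          apply Fin.ext; simp; omega
        rw [hfin] at hgj
        exact hgj
      rw [hint] at hmem
      exact hmem
    -- Step B: witnesses have trivial k-th coordinate
    have hB : ∀ (k : Fin n) (g : Fin n → G), cloneMap d n φ k g = h → g k = 1 := by
      intro k g hg
      have hk := k.isLt
      set jv := max (k : ℕ) (d - 1) with hjv
      have hj1 : jv < n + d - 1 := by omega
      have hgj := congrFun hg ⟨jv, hj1⟩
      rw [cloneMap] at hgj
      rw [dif_neg (by (try simp only [Fin.val_mk]); omega), dif_pos (by (try simp only [Fin.val_mk]); omega)] at hgj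
      have hz := hA ⟨jv, hj1⟩ (by (try simp only [Fin.val_mk]); omega) (by (try simp only [Fin.val_mk]); omega)
      rw [hz] at hgj
      apply hinj ⟨jv - (k : ℕ), by omega⟩
      rw [hgj, map_one]
    funext j
    have hj := j.isLt
    have hkv : min (j : ℕ) (n - 1) < n := by omega
    obtain ⟨g, hg⟩ := H ⟨min (j : ℕ) (n - 1), hkv⟩
    have hgk := hB _ g hg
    have hgj := congrFun hg j
    rw [cloneMap] at hgj
    rw [dif_neg (by (try simp only [Fin.val_mk]); omega), dif_pos (by (try simp only [Fin.val_mk]); omega)] at hgj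
    rw [hgk, map_one] at hgj
    exact hgj.symm
  · intro hh k
    subst hh
    refine ⟨fun _ => 1, ?_⟩
    funext j
    rw [cloneMap]
    split_ifs <;> simp
end
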